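/- arXiv:1511.01593 — 4 statements merged into one kernel-verified Lean document; each statement's English description precedes it below -/
import Mathlib

section
/- Let τ > 0 and let h_τ : ℝ → ℝ be the Huber function h_τ(a) = a²/2 for |a| ≤ τ and h_τ(a) = τ|a| − τ²/2 for |a| > τ. Define ψ : (0,1] → ℝ by ψ(u) = τ²(1 − u)/(2u). Then for every a ∈ ℝ: h_τ(a) = min over u ∈ (0,1] of ( u·a²/2 + ψ(u) ), and the minimum is attained at u = σ(a), where σ(a) = 1 if |a| ≤ τ and σ(a) = τ/|a| if |a| > τ. -/
/-- The Huber function with threshold `τ`. -/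
noncomputable def huber (τ a : ℝ) : ℝ :=
  if |a| ≤ τ then a ^ 2 / 2 else τ * |a| - τ ^ 2 / 2

/-- Multiplicative half-quadratic representation of the Huber function: with the
dual potential `ψ(u) = τ²(1-u)/(2u)`, we have
`h_τ(a) = min_{u ∈ (0,1]} (u a²/2 + ψ(u))`, with the minimum attained at
`u = σ(a)`, where `σ(a) = 1` if `|a| ≤ τ` and `σ(a) = τ/|a|` otherwise. -/
theorem stmt_6 (τ : ℝ) (hτ : 0 < τ) (a : ℝ) :
    IsLeast ((fun u : ℝ => u * a ^ 2 / 2 + τ ^ 2 * (1 - u) / (2 * u)) ''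
        Set.Ioc (0 : ℝ) 1) (huber τ a) ∧
    (if |a| ≤ τ then (1 : ℝ) else τ / |a|) ∈ Set.Ioc (0 : ℝ) 1 ∧
    huber τ a = (if |a| ≤ τ then (1 : ℝ) else τ / |a|) * a ^ 2 / 2 +
      τ ^ 2 * (1 - (if |a| ≤ τ then (1 : ℝ) else τ / |a|)) /
        (2 * (if |a| ≤ τ then (1 : ℝ) else τ / |a|)) := by
  have habs : 0 ≤ |a| := abs_nonneg a
  by_cases h : |a| ≤ τ
  · -- quadratic region
    have ha2 : a ^ 2 ≤ τ ^ 2 := by nlinarith [sq_abs a]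
    simp only [huber, h, if_true]
    refine ⟨⟨⟨1, ⟨zero_lt_one, le_refl 1⟩, by ring⟩, ?_⟩, ⟨zero_lt_one, le_refl 1⟩, by ring⟩
    rintro x ⟨u, ⟨hu0, hu1⟩, rfl⟩
    have h2u : (0:ℝ) < 2 * u := by linarith
    have key : u * a ^ 2 / 2 + τ ^ 2 * (1 - u) / (2 * u) - a ^ 2 / 2
        = (1 - u) * (τ ^ 2 - u * a ^ 2) / (2 * u) := by
      field_simp
      ring
    have hnum : 0 ≤ (1 - u) * (τ ^ 2 - u * a ^ 2) := by
      have h2 : u * a ^ 2 ≤ τ ^ 2 :=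
        le_trans (mul_le_of_le_one_left (sq_nonneg a) hu1) ha2
      exact mul_nonneg (by linarith) (by linarith)
    have := div_nonneg hnum (le_of_lt h2u)
    simp only [Set.mem_image] at *
    linarith [key ▸ this]
  · -- linear region
    push_neg at h
    have ha0 : (0:ℝ) < |a| := lt_trans hτ h
    have hane : |a| ≠ 0 := ne_of_gt ha0
    have hsq : a ^ 2 = |a| ^ 2 := (sq_abs a).symm
    have hmem : τ / |a| ∈ Set.Ioc (0:ℝ) 1 :=
      ⟨div_pos hτ ha0, (div_le_one ha0).mpr (le_of_lt h)⟩
    have heq : huber τ a = (τ / |a|) * a ^ 2 / 2 +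
        τ ^ 2 * (1 - τ / |a|) / (2 * (τ / |a|)) := by
      simp only [huber, not_le.mpr h, if_false]
      rw [hsq]
      field_simp
      ring
    simp only [not_le.mpr h, if_false]
    refine ⟨⟨⟨τ / |a|, hmem, heq.symm⟩, ?_⟩, hmem, heq⟩
    rintro x ⟨u, ⟨hu0, hu1⟩, rfl⟩
    have h2u : (0:ℝ) < 2 * u := by linarith
    have key : u * a ^ 2 / 2 + τ ^ 2 * (1 - u) / (2 * u) - (τ * |a| - τ ^ 2 / 2)
        = (u * |a| - τ) ^ 2 / (2 * u) := by
      rw [hsq]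
      field_simp
      ring
    have := div_nonneg (sq_nonneg (u * |a| - τ)) (le_of_lt h2u)
    simp only [huber, not_le.mpr h, if_false]
    linarith [key ▸ this]
end

section
/- Let N ≥ 2 be an integer, R a real m×m symmetric positive definite matrix, X a real n×k matrix, and H a real m×n matrix. Set Y = H X, P^b = (N−1)⁻¹ X Xᵀ, and S = ((N−1)·I_k + Yᵀ R⁻¹ Y)⁻¹. Then the matrix H P^b Hᵀ + R is invertible, and the Kalman gain satisfies the identity P^b Hᵀ ( H P^b Hᵀ + R )⁻¹ = X S Yᵀ R⁻¹. -/
open Matrix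

/-- Ensemble-space form of the Kalman gain: with `Y = H X`,
`P^b = (N-1)⁻¹ X Xᵀ` and `S = ((N-1) I + Yᵀ R⁻¹ Y)⁻¹`, the matrix
`H P^b Hᵀ + R` is invertible and
`P^b Hᵀ (H P^b Hᵀ + R)⁻¹ = X S Yᵀ R⁻¹`. -/
theorem stmt_9 {m n k : ℕ} (N : ℕ) (hN : 2 ≤ N)
    (R : Matrix (Fin m) (Fin m) ℝ) (hR : R.PosDef)
    (X : Matrix (Fin n) (Fin k) ℝ) (H : Matrix (Fin m) (Fin n) ℝ) :
    IsUnit (H * (((N : ℝ) - 1)⁻¹ • (X * Xᵀ)) * Hᵀ + R) ∧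
    (((N : ℝ) - 1)⁻¹ • (X * Xᵀ)) * Hᵀ *
        (H * (((N : ℝ) - 1)⁻¹ • (X * Xᵀ)) * Hᵀ + R)⁻¹ =
      X * (((N : ℝ) - 1) • (1 : Matrix (Fin k) (Fin k) ℝ)
          + (H * X)ᵀ * R⁻¹ * (H * X))⁻¹ * (H * X)ᵀ * R⁻¹ := by
  have hN1 : (0:ℝ) < (N:ℝ) - 1 := by
    have : (2:ℝ) ≤ (N:ℝ) := by exact_mod_cast hN
    linarith
  have hc : (0:ℝ) < ((N:ℝ) - 1)⁻¹ := inv_pos.mpr hN1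
  set c : ℝ := ((N:ℝ) - 1)⁻¹ with hcdef
  set Y : Matrix (Fin m) (Fin k) ℝ := H * X with hY
  have hA_eq : H * (c • (X * Xᵀ)) * Hᵀ + R = c • (Y * Yᵀ) + R := by
    simp only [hY, Matrix.mul_smul, Matrix.smul_mul, Matrix.transpose_mul, Matrix.mul_assoc]
  set A : Matrix (Fin m) (Fin m) ℝ := c • (Y * Yᵀ) + R with hAdef
  have hYYT : (c • (Y * Yᵀ)).PosSemidef := by
    have h1 : (Y * Yᵀ).PosSemidef := by
      have := Matrix.posSemidef_self_mul_conjTranspose Y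
      rwa [Matrix.conjTranspose_eq_transpose_of_trivial] at this
    refine ⟨?_, fun x => ?_⟩
    · show (c • (Y * Yᵀ))ᴴ = _
      rw [Matrix.conjTranspose_smul, h1.1]
      simp
    · exact (h1.smul hc.le).2 x
  have hA : A.PosDef := Matrix.PosDef.posSemidef_add hYYT hR
  set M : Matrix (Fin k) (Fin k) ℝ :=
    ((N:ℝ) - 1) • (1 : Matrix (Fin k) (Fin k) ℝ) + Yᵀ * R⁻¹ * Y with hMdef
  have hM : M.PosDef := by
    have h1 : (((N:ℝ) - 1) • (1 : Matrix (Fin k) (Fin k) ℝ)).PosDef := by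
      refine ⟨?_, fun x hx => ?_⟩
      · show (((N:ℝ) - 1) • (1 : Matrix (Fin k) (Fin k) ℝ))ᴴ = _
        rw [Matrix.conjTranspose_smul]
        simp
      exact (Matrix.PosDef.one.smul hN1).2 hx
    have h2 : (Yᵀ * R⁻¹ * Y).PosSemidef := by
      have := hR.inv.posSemidef.conjTranspose_mul_mul_same Y
      rwa [Matrix.conjTranspose_eq_transpose_of_trivial] at this
    exact h1.add_posSemidef h2
  have hAunit : IsUnit A := hA.isUnit
  refine ⟨by rwa [hA_eq], ?_⟩
  have hRinvR : R⁻¹ * R = 1 := Matrix.nonsing_inv_mul R (hR.isUnit.map Matrix.detMonoidHom)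
  have key : Yᵀ * R⁻¹ * A = M * (c • Yᵀ) := by
    have h1 : ((N:ℝ) - 1) * c = 1 := mul_inv_cancel₀ hN1.ne'
    have h1' : c * ((N:ℝ) - 1) = 1 := inv_mul_cancel₀ hN1.ne'
    rw [hAdef, hMdef]
    simp only [Matrix.mul_add, Matrix.add_mul, Matrix.mul_smul, Matrix.smul_mul, smul_add,
      smul_smul, h1, h1', one_smul, Matrix.one_mul, Matrix.mul_assoc, hRinvR, Matrix.mul_one]
    abel
  have hMinvM : M⁻¹ * M = 1 := Matrix.nonsing_inv_mul M (hM.isUnit.map Matrix.detMonoidHom)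
  have hAAinv : A * A⁻¹ = 1 := Matrix.mul_nonsing_inv A (hAunit.map Matrix.detMonoidHom)
  have key2 : M⁻¹ * Yᵀ * R⁻¹ = c • (Yᵀ * A⁻¹) := by
    calc M⁻¹ * Yᵀ * R⁻¹
        = M⁻¹ * (Yᵀ * R⁻¹ * A) * A⁻¹ := by
          rw [Matrix.mul_assoc M⁻¹ (Yᵀ * R⁻¹ * A) A⁻¹, Matrix.mul_assoc (Yᵀ * R⁻¹) A A⁻¹,
            hAAinv, Matrix.mul_one, Matrix.mul_assoc]
      _ = M⁻¹ * (M * (c • Yᵀ)) * A⁻¹ := by rw [key]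
      _ = c • (Yᵀ * A⁻¹) := by
          rw [← Matrix.mul_assoc M⁻¹ M (c • Yᵀ), hMinvM, Matrix.one_mul, Matrix.smul_mul]
  calc (c • (X * Xᵀ)) * Hᵀ * (H * (c • (X * Xᵀ)) * Hᵀ + R)⁻¹
      = (c • (X * Xᵀ)) * Hᵀ * A⁻¹ := by rw [hA_eq]
    _ = X * (c • (Yᵀ * A⁻¹)) := by
        simp only [hY, Matrix.transpose_mul, Matrix.smul_mul, Matrix.mul_smul,
          Matrix.mul_assoc]
    _ = X * (M⁻¹ * Yᵀ * R⁻¹) := by rw [key2]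
    _ = X * M⁻¹ * Yᵀ * R⁻¹ := by simp only [Matrix.mul_assoc]
end

section
/- Let N ≥ 2 be an integer, R a real m×m symmetric positive definite matrix, X a real n×k matrix, and H a real m×n matrix. Set Y = H X, P^b = (N−1)⁻¹ X Xᵀ, S = ((N−1)·I_k + Yᵀ R⁻¹ Y)⁻¹, and K = X S Yᵀ R⁻¹. Then the analysis error covariance satisfies (I_n − K H) P^b = X S Xᵀ. -/
open Matrix

lemma smul_one_posDef {k : ℕ} {c : ℝ} (hc : 0 < c) :
    (c • (1 : Matrix (Fin k) (Fin k) ℝ)).PosDef := by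
  refine Matrix.PosDef.of_dotProduct_mulVec_pos ?_ ?_
  · unfold Matrix.IsHermitian; simp [Matrix.conjTranspose_smul]
  · intro x hx
    simp only [smul_mulVec, one_mulVec, dotProduct_smul, smul_eq_mul]
    have h := (dotProduct_star_self_pos_iff (v := x)).mpr hx
    exact mul_pos hc (by rwa [dotProduct_comm] at h)

/-- The ensemble Kalman filter analysis covariance: with `Y = H X`,
`P^b = (N-1)⁻¹ X Xᵀ`, `S = ((N-1) I + Yᵀ R⁻¹ Y)⁻¹`, and gain
`K = X S Yᵀ R⁻¹`, we have `(I - K H) P^b = X S Xᵀ`. -/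
theorem stmt_10 {m n k : ℕ} (N : ℕ) (hN : 2 ≤ N)
    (R : Matrix (Fin m) (Fin m) ℝ) (hR : R.PosDef)
    (X : Matrix (Fin n) (Fin k) ℝ) (H : Matrix (Fin m) (Fin n) ℝ) :
    ((1 : Matrix (Fin n) (Fin n) ℝ)
        - X * (((N : ℝ) - 1) • (1 : Matrix (Fin k) (Fin k) ℝ)
            + (H * X)ᵀ * R⁻¹ * (H * X))⁻¹ * (H * X)ᵀ * R⁻¹ * H) *
      (((N : ℝ) - 1)⁻¹ • (X * Xᵀ)) =
    X * (((N : ℝ) - 1) • (1 : Matrix (Fin k) (Fin k) ℝ)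
        + (H * X)ᵀ * R⁻¹ * (H * X))⁻¹ * Xᵀ := by
  set c : ℝ := (N : ℝ) - 1 with hc
  have hcpos : 0 < c := by
    have : (2 : ℝ) ≤ (N : ℝ) := by exact_mod_cast hN
    linarith
  set Y := H * X with hY
  set A := c • (1 : Matrix (Fin k) (Fin k) ℝ) + Yᵀ * R⁻¹ * Y with hA
  have hsemi : (Yᵀ * R⁻¹ * Y).PosSemidef := by
    have := hR.inv.posSemidef.conjTranspose_mul_mul_same Y
    simpa using this
  have hApd : A.PosDef := (smul_one_posDef hcpos).add_posSemidef hsemi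
  have hAunit : IsUnit A.det := hApd.det_pos.ne'.isUnit
  have hinv : A⁻¹ * A = 1 := nonsing_inv_mul A hAunit
  have key : X * Xᵀ - X * A⁻¹ * Yᵀ * R⁻¹ * H * (X * Xᵀ) = c • (X * A⁻¹ * Xᵀ) := by
    have h1 : X * A⁻¹ * Yᵀ * R⁻¹ * H * (X * Xᵀ) = X * A⁻¹ * (Yᵀ * R⁻¹ * Y) * Xᵀ := by
      simp only [hY, Matrix.mul_assoc]
    have h2 : X * Xᵀ = X * A⁻¹ * A * Xᵀ := by
      rw [Matrix.mul_assoc X A⁻¹ A, hinv, Matrix.mul_one]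
    rw [h1, h2]
    have h3 : A⁻¹ * A * Xᵀ - A⁻¹ * (Yᵀ * R⁻¹ * Y) * Xᵀ = A⁻¹ * (c • (1:Matrix (Fin k) (Fin k) ℝ)) * Xᵀ := by
      rw [← Matrix.sub_mul, ← Matrix.mul_sub]
      congr 1
      rw [hA, add_sub_cancel_right]
    calc X * A⁻¹ * A * Xᵀ - X * A⁻¹ * (Yᵀ * R⁻¹ * Y) * Xᵀ
        = X * (A⁻¹ * A * Xᵀ - A⁻¹ * (Yᵀ * R⁻¹ * Y) * Xᵀ) := by
          simp only [Matrix.mul_sub, Matrix.mul_assoc]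
      _ = X * (A⁻¹ * (c • (1:Matrix (Fin k) (Fin k) ℝ)) * Xᵀ) := by rw [h3]
      _ = c • (X * A⁻¹ * Xᵀ) := by
          simp [Matrix.mul_smul, Matrix.smul_mul, Matrix.mul_assoc]
  rw [Matrix.sub_mul, Matrix.one_mul, Matrix.mul_smul, ← smul_sub, key, smul_smul,
    inv_mul_cancel₀ hcpos.ne', one_smul]
end

section
/- Let B be a real n×n symmetric positive definite matrix, R a real m×m symmetric positive definite matrix, H a real m×n matrix, x^b ∈ ℝ^n and y ∈ ℝ^m. Then H B Hᵀ + R is invertible, and the function J(x) = (1/2)(x − x^b)ᵀ B⁻¹ (x − x^b) + (1/2)(H x − y)ᵀ R⁻¹ (H x − y) on ℝ^n has a unique global minimizer, given by the Kalman analysis x^a = x^b + B Hᵀ ( H B Hᵀ + R )⁻¹ ( y − H x^b ). -/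
open Matrix

private lemma quad_expand {k : ℕ} (M : Matrix (Fin k) (Fin k) ℝ) (hM : Mᵀ = M)
    (a d : Fin k → ℝ) :
    (a + d) ⬝ᵥ M *ᵥ (a + d) = a ⬝ᵥ M *ᵥ a + 2 * (d ⬝ᵥ M *ᵥ a) + d ⬝ᵥ M *ᵥ d := by
  have h : a ⬝ᵥ M *ᵥ d = d ⬝ᵥ M *ᵥ a := by
    rw [dotProduct_mulVec, ← mulVec_transpose, hM, dotProduct_comm]
  simp only [mulVec_add, dotProduct_add, add_dotProduct, h]
  ring

private lemma dot_shift {k l : ℕ} (H : Matrix (Fin l) (Fin k) ℝ) (d : Fin k → ℝ)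
    (v : Fin l → ℝ) : (H *ᵥ d) ⬝ᵥ v = d ⬝ᵥ (Hᵀ *ᵥ v) := by
  rw [dotProduct_mulVec, vecMul_transpose]

/-- Equivalence of the 3D-Var analysis with linear observation operator and the
Kalman filter update: `H B Hᵀ + R` is invertible, and
`x^a = x^b + B Hᵀ (H B Hᵀ + R)⁻¹ (y - H x^b)` is the unique global minimizer of
`J(x) = ½(x-x^b)ᵀ B⁻¹ (x-x^b) + ½(Hx-y)ᵀ R⁻¹ (Hx-y)`. -/
theorem stmt_11 {n m : ℕ}
    (B : Matrix (Fin n) (Fin n) ℝ) (hB : B.PosDef)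
    (R : Matrix (Fin m) (Fin m) ℝ) (hR : R.PosDef)
    (H : Matrix (Fin m) (Fin n) ℝ) (xb : Fin n → ℝ) (y : Fin m → ℝ) :
    IsUnit (H * B * Hᵀ + R) ∧
    ∃ xa : Fin n → ℝ,
      xa = xb + (B * Hᵀ * (H * B * Hᵀ + R)⁻¹) *ᵥ (y - H *ᵥ xb) ∧
      (∀ x : Fin n → ℝ,
        (1 / 2) * ((xa - xb) ⬝ᵥ (B⁻¹ *ᵥ (xa - xb)))
            + (1 / 2) * ((H *ᵥ xa - y) ⬝ᵥ (R⁻¹ *ᵥ (H *ᵥ xa - y))) ≤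
          (1 / 2) * ((x - xb) ⬝ᵥ (B⁻¹ *ᵥ (x - xb)))
            + (1 / 2) * ((H *ᵥ x - y) ⬝ᵥ (R⁻¹ *ᵥ (H *ᵥ x - y)))) ∧
      ∀ x : Fin n → ℝ,
        (∀ x' : Fin n → ℝ,
          (1 / 2) * ((x - xb) ⬝ᵥ (B⁻¹ *ᵥ (x - xb)))
              + (1 / 2) * ((H *ᵥ x - y) ⬝ᵥ (R⁻¹ *ᵥ (H *ᵥ x - y))) ≤
            (1 / 2) * ((x' - xb) ⬝ᵥ (B⁻¹ *ᵥ (x' - xb)))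
              + (1 / 2) * ((H *ᵥ x' - y) ⬝ᵥ (R⁻¹ *ᵥ (H *ᵥ x' - y)))) →
        x = xa := by
  have hBi : B⁻¹.PosDef := hB.inv
  have hRi : R⁻¹.PosDef := hR.inv
  have hS : (H * B * Hᵀ + R).PosDef := by
    refine Matrix.PosDef.posSemidef_add ?_ hR
    have := hB.posSemidef.mul_mul_conjTranspose_same H
    rwa [conjTranspose_eq_transpose_of_trivial] at this
  have hA : (B⁻¹ + Hᵀ * R⁻¹ * H).PosDef := by
    refine hBi.add_posSemidef ?_
    have := hRi.posSemidef.conjTranspose_mul_mul_same H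
    rwa [conjTranspose_eq_transpose_of_trivial] at this
  set S : Matrix (Fin m) (Fin m) ℝ := H * B * Hᵀ + R with hSdef
  set A : Matrix (Fin n) (Fin n) ℝ := B⁻¹ + Hᵀ * R⁻¹ * H with hAdef
  have hBisym : (B⁻¹)ᵀ = B⁻¹ := by
    have := hBi.isHermitian
    rwa [Matrix.IsHermitian, conjTranspose_eq_transpose_of_trivial] at this
  have hRisym : (R⁻¹)ᵀ = R⁻¹ := by
    have := hRi.isHermitian
    rwa [Matrix.IsHermitian, conjTranspose_eq_transpose_of_trivial] at this
  have hBinv : B⁻¹ * B = 1 := nonsing_inv_mul B hB.det_pos.ne'.isUnit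
  have hRinv : R⁻¹ * R = 1 := nonsing_inv_mul R hR.det_pos.ne'.isUnit
  have hSinv : S * S⁻¹ = 1 := mul_nonsing_inv S hS.det_pos.ne'.isUnit
  have hkey : A * (B * Hᵀ * S⁻¹) = Hᵀ * R⁻¹ := by
    have h1 : A * (B * Hᵀ) = Hᵀ * R⁻¹ * S := by
      have e1 : A * (B * Hᵀ) = B⁻¹ * B * Hᵀ + Hᵀ * R⁻¹ * (H * B * Hᵀ) := by
        simp only [hAdef, Matrix.add_mul, Matrix.mul_assoc]
      have e2 : Hᵀ * R⁻¹ * S = Hᵀ * R⁻¹ * (H * B * Hᵀ) + Hᵀ * (R⁻¹ * R) := by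
        simp only [hSdef, Matrix.mul_add, Matrix.mul_assoc]
      rw [e1, e2, hBinv, hRinv, Matrix.one_mul, Matrix.mul_one, add_comm]
    calc A * (B * Hᵀ * S⁻¹) = A * (B * Hᵀ) * S⁻¹ := by rw [← Matrix.mul_assoc]
      _ = Hᵀ * R⁻¹ * S * S⁻¹ := by rw [h1]
      _ = Hᵀ * R⁻¹ := by rw [Matrix.mul_assoc (Hᵀ * R⁻¹), hSinv, Matrix.mul_one]
  refine ⟨hS.isUnit, ?_⟩
  set r : Fin m → ℝ := y - H *ᵥ xb with hr
  set xa : Fin n → ℝ := xb + (B * Hᵀ * S⁻¹) *ᵥ r with hxa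
  have hstat : A *ᵥ (xa - xb) = Hᵀ *ᵥ (R⁻¹ *ᵥ r) := by
    have h1 : xa - xb = (B * Hᵀ * S⁻¹) *ᵥ r := by rw [hxa]; abel
    rw [h1, mulVec_mulVec, hkey, ← mulVec_mulVec]
  have hHxa : H *ᵥ xa - y = H *ᵥ (xa - xb) - r := by
    rw [hr, mulVec_sub]; abel
  have hdiff : ∀ x : Fin n → ℝ,
      (1 / 2) * ((x - xb) ⬝ᵥ (B⁻¹ *ᵥ (x - xb)))
          + (1 / 2) * ((H *ᵥ x - y) ⬝ᵥ (R⁻¹ *ᵥ (H *ᵥ x - y)))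
      = (1 / 2) * ((xa - xb) ⬝ᵥ (B⁻¹ *ᵥ (xa - xb)))
          + (1 / 2) * ((H *ᵥ xa - y) ⬝ᵥ (R⁻¹ *ᵥ (H *ᵥ xa - y)))
          + (1 / 2) * ((x - xa) ⬝ᵥ A *ᵥ (x - xa)) := by
    intro x
    set d : Fin n → ℝ := x - xa with hd
    have h1 : x - xb = (xa - xb) + d := by rw [hd]; abel
    have h2 : H *ᵥ x - y = (H *ᵥ xa - y) + H *ᵥ d := by
      have hx : x = xa + d := by rw [hd]; abel
      rw [hx, mulVec_add]; abel
    rw [h1, h2, quad_expand B⁻¹ hBisym, quad_expand R⁻¹ hRisym]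
    have h3 : (H *ᵥ d) ⬝ᵥ R⁻¹ *ᵥ (H *ᵥ xa - y)
        = d ⬝ᵥ (Hᵀ *ᵥ (R⁻¹ *ᵥ (H *ᵥ xa - y))) := dot_shift H d _
    have h4 : (H *ᵥ d) ⬝ᵥ R⁻¹ *ᵥ (H *ᵥ d) = d ⬝ᵥ ((Hᵀ * R⁻¹ * H) *ᵥ d) := by
      rw [dot_shift H d _, mulVec_mulVec, mulVec_mulVec]
    have h5 : d ⬝ᵥ (B⁻¹ *ᵥ (xa - xb)) + d ⬝ᵥ (Hᵀ *ᵥ (R⁻¹ *ᵥ (H *ᵥ xa - y))) = 0 := by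
      have e : B⁻¹ *ᵥ (xa - xb) + Hᵀ *ᵥ (R⁻¹ *ᵥ (H *ᵥ xa - y)) = 0 := by
        have e1 : Hᵀ *ᵥ (R⁻¹ *ᵥ (H *ᵥ xa - y))
            = (Hᵀ * R⁻¹ * H) *ᵥ (xa - xb) - Hᵀ *ᵥ (R⁻¹ *ᵥ r) := by
          rw [hHxa, mulVec_sub, mulVec_sub, mulVec_mulVec, mulVec_mulVec, ← mulVec_mulVec]
        rw [e1]
        have e2 : B⁻¹ *ᵥ (xa - xb) + (Hᵀ * R⁻¹ * H) *ᵥ (xa - xb) = A *ᵥ (xa - xb) := by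
          rw [hAdef, add_mulVec]
        rw [← add_sub_assoc, e2, hstat, sub_self]
      calc d ⬝ᵥ (B⁻¹ *ᵥ (xa - xb)) + d ⬝ᵥ (Hᵀ *ᵥ (R⁻¹ *ᵥ (H *ᵥ xa - y)))
          = d ⬝ᵥ (B⁻¹ *ᵥ (xa - xb) + Hᵀ *ᵥ (R⁻¹ *ᵥ (H *ᵥ xa - y))) := by
            rw [dotProduct_add]
        _ = 0 := by rw [e, dotProduct_zero]
    have h6 : d ⬝ᵥ (B⁻¹ *ᵥ d) + d ⬝ᵥ ((Hᵀ * R⁻¹ * H) *ᵥ d) = d ⬝ᵥ A *ᵥ d := by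
      rw [hAdef, add_mulVec, dotProduct_add]
    rw [h3, h4]
    linarith [h5, h6]
  have hnonneg : ∀ v : Fin n → ℝ, 0 ≤ v ⬝ᵥ A *ᵥ v := fun v => by
    simpa using hA.posSemidef.dotProduct_mulVec_nonneg v
  have hmin : ∀ x : Fin n → ℝ,
      (1 / 2) * ((xa - xb) ⬝ᵥ (B⁻¹ *ᵥ (xa - xb)))
          + (1 / 2) * ((H *ᵥ xa - y) ⬝ᵥ (R⁻¹ *ᵥ (H *ᵥ xa - y))) ≤
        (1 / 2) * ((x - xb) ⬝ᵥ (B⁻¹ *ᵥ (x - xb)))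
          + (1 / 2) * ((H *ᵥ x - y) ⬝ᵥ (R⁻¹ *ᵥ (H *ᵥ x - y))) := by
    intro x
    rw [hdiff x]
    linarith [hnonneg (x - xa)]
  refine ⟨xa, hxa, hmin, ?_⟩
  intro x hx
  have h1 := hx xa
  have h2 := hmin x
  have h3 : (x - xa) ⬝ᵥ A *ᵥ (x - xa) = 0 := by
    have := hdiff x
    linarith
  by_contra hne
  have hd0 : x - xa ≠ 0 := fun h => hne (by rwa [sub_eq_zero] at h)
  have hpos := hA.dotProduct_mulVec_pos (x := x - xa) (by simpa using hd0)
  simp only [star_trivial] at hpos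
  linarith
end
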